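/- Let p ≥ 3 be a real number and set r = 2(p−1)/(p−2). There exists a constant C > 0 such that for every v ∈ C_c^∞(ℝ²; ℂ), ‖ |v|^{p−1} ‖_{L²(ℝ²)} + ‖ ∇(|v|^{p−1}) ‖_{L²(ℝ²)} ≤ C ( ‖v‖_{L^r(ℝ²)} + ‖∇v‖_{L^r(ℝ²)} )^{p−1}; that is, ‖ |v|^{p−1} ‖_{H¹(ℝ²)} ≲ ‖v‖_{W^{1,r}(ℝ²)}^{p−1}. -/

import Mathlib

open MeasureTheory Real

noncomputable abbrev E2 : Type := EuclideanSpace ℝ (Fin 2)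

namespace PowerH1

open ENNReal NNReal

noncomputable def NN (r : ℝ) (v : E2 → ℂ) : ℝ≥0∞ :=
  (∫⁻ x : E2, (‖v x‖₊ : ℝ≥0∞) ^ r) ^ (1/r) + (∫⁻ x : E2, (‖fderiv ℝ v x‖₊ : ℝ≥0∞) ^ r) ^ (1/r)

/-- `L^q` norm controlled by `W^{1,r}` norm, uniformly. -/
def Good (r q : ℝ) : Prop :=
  ∃ C : ℝ≥0∞, C ≠ ∞ ∧ ∀ v : E2 → ℂ, ContDiff ℝ (⊤ : ℕ∞) v → HasCompactSupport v →
    (∫⁻ x : E2, (‖v x‖₊ : ℝ≥0∞) ^ q) ^ (1/q) ≤ C * NN r v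

/-- finiteness of lintegrals of powers of cpt supported cont functions -/
lemma lintegral_rpow_lt_top {F : Type*} [NormedAddCommGroup F] (f : E2 → F)
    (hf : Continuous f) (h2f : HasCompactSupport f) {q : ℝ} (hq : 0 < q) :
    (∫⁻ x : E2, (‖f x‖₊ : ℝ≥0∞) ^ q) < ∞ := by
  have hg : Continuous (fun x : E2 => ‖f x‖ ^ q) :=
    hf.norm.rpow_const (fun x => Or.inr hq.le)
  have h2g : HasCompactSupport (fun x : E2 => ‖f x‖ ^ q) :=
    h2f.norm.rpow_const hq.ne'
  have hint : Integrable (fun x : E2 => ‖f x‖ ^ q) := hg.integrable_of_hasCompactSupport h2g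
  have := hint.hasFiniteIntegral
  rw [HasFiniteIntegral] at this
  refine lt_of_eq_of_lt ?_ this
  apply lintegral_congr
  intro x
  rw [Real.enorm_rpow_of_nonneg (norm_nonneg _) hq.le, enorm_norm, enorm_eq_nnnorm]

lemma NN_lt_top {r : ℝ} (hr : 0 < r) (v : E2 → ℂ) (hv : ContDiff ℝ (⊤ : ℕ∞) v)
    (h2v : HasCompactSupport v) : NN r v < ∞ := by
  have h1 := lintegral_rpow_lt_top v hv.continuous h2v hr
  have h2 := lintegral_rpow_lt_top (fderiv ℝ v) (hv.continuous_fderiv (by simp)) (h2v.fderiv (𝕜 := ℝ)) hr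
  rw [NN]
  exact ENNReal.add_lt_top.mpr
    ⟨ENNReal.rpow_lt_top_of_nonneg (by positivity) h1.ne,
     ENNReal.rpow_lt_top_of_nonneg (by positivity) h2.ne⟩

/-- if `NN r v = 0` then `v = 0`. -/
lemma eq_zero_of_NN_eq_zero {r : ℝ} (hr : 0 < r) (v : E2 → ℂ) (hv : ContDiff ℝ (⊤ : ℕ∞) v)
    (hN : NN r v = 0) : v = 0 := by
  rw [NN, add_eq_zero] at hN
  have h1 : (∫⁻ x : E2, (‖v x‖₊ : ℝ≥0∞) ^ r) = 0 := by
    have := hN.1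
    rw [ENNReal.rpow_eq_zero_iff] at this
    rcases this with ⟨h, _⟩ | ⟨_, h⟩
    · exact h
    · exfalso; have : (0:ℝ) < 1/r := by positivity
      linarith
  rw [lintegral_eq_zero_iff'] at h1
  · have hae : v =ᵐ[(volume : Measure E2)] 0 := by
      filter_upwards [h1] with x hx
      simp only [Pi.zero_apply] at hx ⊢
      rw [ENNReal.rpow_eq_zero_iff] at hx
      rcases hx with ⟨h, _⟩ | ⟨h, _⟩
      · simpa using h
      · exact absurd h (by simp)
    exact (Continuous.ae_eq_iff_eq (volume : Measure E2) hv.continuous continuous_const).mp hae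
  · have : Continuous (fun x : E2 => (‖v x‖₊ : ℝ≥0∞) ^ r) :=
      ENNReal.continuous_rpow_const.comp (ENNReal.continuous_coe.comp hv.continuous.nnnorm)
    exact this.aemeasurable

/-- GNS on ℝ², L¹ → L². -/
lemma gns (u : E2 → ℝ) (hu : ContDiff ℝ 1 u) (h2u : HasCompactSupport u) :
    (∫⁻ x : E2, (‖u x‖₊ : ℝ≥0∞) ^ (2:ℝ)) ^ (1/2:ℝ)
      ≤ (eLpNormLESNormFDerivOneConst (volume : Measure E2) 2 : ℝ≥0∞)
        * ∫⁻ x : E2, (‖fderiv ℝ u x‖₊ : ℝ≥0∞) := by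
  have hfr : Module.finrank ℝ E2 = 2 := finrank_euclideanSpace_fin
  have hconj : NNReal.HolderConjugate (Module.finrank ℝ E2) 2 := by
    rw [hfr, NNReal.holderConjugate_iff]
    constructor
    · norm_num
    · rw [← NNReal.coe_inj]; push_cast; norm_num
  have h := eLpNorm_le_eLpNorm_fderiv_one (volume : Measure E2) hu h2u hconj
  rw [eLpNorm_nnreal_eq_lintegral (by norm_num : (2:ℝ≥0) ≠ 0),
    eLpNorm_one_eq_lintegral_enorm] at h
  simpa [enorm_eq_nnnorm] using h

/-- measurability helper -/
lemma aemeas {F : Type*} [NormedAddCommGroup F] (f : E2 → F) (hf : Continuous f) (q : ℝ) :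
    AEMeasurable (fun x : E2 => (‖f x‖₊ : ℝ≥0∞) ^ q) volume :=
  (ENNReal.continuous_rpow_const.comp (ENNReal.continuous_coe.comp hf.nnnorm)).aemeasurable

/-- pointwise derivative bound -/
lemma deriv_bound (v : E2 → ℂ) (hv : ContDiff ℝ (⊤ : ℕ∞) v) {β : ℝ} (hβ1 : 1 < β) (x : E2) :
    (‖fderiv ℝ (fun y => ‖v y‖ ^ β) x‖₊ : ℝ≥0∞)
      ≤ ENNReal.ofReal β * ((‖v x‖₊ : ℝ≥0∞) ^ (β - 1) * (‖fderiv ℝ v x‖₊ : ℝ≥0∞)) := by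
  have h := norm_fderiv_norm_rpow_le (hv.differentiable (by simp)) hβ1 (x := x)
  calc (‖fderiv ℝ (fun y => ‖v y‖ ^ β) x‖₊ : ℝ≥0∞)
      = ENNReal.ofReal ‖fderiv ℝ (fun y => ‖v y‖ ^ β) x‖ := (ofReal_norm _).symm
    _ ≤ ENNReal.ofReal (β * ‖v x‖ ^ (β - 1) * ‖fderiv ℝ v x‖) := ENNReal.ofReal_le_ofReal h
    _ = ENNReal.ofReal β * ((‖v x‖₊ : ℝ≥0∞) ^ (β - 1) * (‖fderiv ℝ v x‖₊ : ℝ≥0∞)) := by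
        rw [ENNReal.ofReal_mul (by positivity), ENNReal.ofReal_mul (by positivity), mul_assoc]
        congr 2
        · rw [← enorm_eq_nnnorm, ← ofReal_norm,
            ← ENNReal.ofReal_rpow_of_nonneg (norm_nonneg _) (by linarith : (0:ℝ) ≤ β - 1)]
        · exact ofReal_norm _

/-- ladder step -/
lemma good_step {r a : ℝ} (hr2 : 2 < r) (ha : r ≤ a) (h : Good r a) :
    Good r (2 * (a * (r-1) / r + 1)) := by
  obtain ⟨C, hC, hG⟩ := h
  have hr0 : (0:ℝ) < r := by linarith
  have hr1 : (1:ℝ) < r := by linarith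
  have ha0 : (0:ℝ) < a := by linarith
  set C₀ : ℝ≥0∞ := (eLpNormLESNormFDerivOneConst (volume : Measure E2) 2 : ℝ≥0∞) with hC₀
  set β : ℝ := a * (r-1) / r + 1 with hβdef
  have hβ1 : 1 < β := by
    have : 0 < a * (r-1) / r := div_pos (mul_pos ha0 (by linarith)) hr0
    simp only [hβdef]; linarith
  have hβ0 : β ≠ 0 := by linarith
  have hβpos : (0:ℝ) < β := by linarith
  have hconj : (r/(r-1)).HolderConjugate r := (Real.HolderConjugate.conjExponent hr1).symm
  unfold Good
  refine ⟨(C₀ * ENNReal.ofReal β * C ^ (β - 1)) ^ (1/β), ?_, ?_⟩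
  · exact ENNReal.rpow_ne_top_of_nonneg (div_nonneg zero_le_one hβpos.le)
      (ENNReal.mul_ne_top (ENNReal.mul_ne_top ENNReal.coe_ne_top ENNReal.ofReal_ne_top)
        (ENNReal.rpow_ne_top_of_nonneg (by linarith) hC))
  intro v hv h2v
  set N := NN r v with hN
  set w : E2 → ℝ := fun y => ‖v y‖ ^ β with hw
  have hwC : ContDiff ℝ 1 w := (hv.of_le (by simp)).norm_rpow hβ1
  have h2w : HasCompactSupport w := h2v.norm.rpow_const hβ0
  have key : (∫⁻ x : E2, (‖v x‖₊ : ℝ≥0∞) ^ (2*β)) ^ ((1:ℝ)/2)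
      ≤ C₀ * (ENNReal.ofReal β * ((C * N) ^ (β-1) * N)) := by
    have e1 : (∫⁻ x : E2, (‖w x‖₊ : ℝ≥0∞) ^ (2:ℝ))
        = ∫⁻ x : E2, (‖v x‖₊ : ℝ≥0∞) ^ (2*β) := by
      apply lintegral_congr
      intro x
      rw [hw]
      rw [Real.nnnorm_rpow_of_nonneg (norm_nonneg _),
        ENNReal.coe_rpow_of_nonneg _ (by linarith : (0:ℝ) ≤ β), ← ENNReal.rpow_mul,
        mul_comm β 2, nnnorm_norm]
    have h1 := gns w hwC h2w
    rw [e1] at h1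
    refine h1.trans ?_
    have h2 : (∫⁻ x : E2, (‖fderiv ℝ w x‖₊ : ℝ≥0∞))
        ≤ ENNReal.ofReal β * ∫⁻ x : E2, (‖v x‖₊ : ℝ≥0∞) ^ (β-1) * (‖fderiv ℝ v x‖₊ : ℝ≥0∞) := by
      rw [← lintegral_const_mul' _ _ ENNReal.ofReal_ne_top]
      apply lintegral_mono
      intro x
      simp only [hw]
      exact deriv_bound v hv hβ1 x
    have h3 : (∫⁻ x : E2, (‖v x‖₊ : ℝ≥0∞) ^ (β-1) * (‖fderiv ℝ v x‖₊ : ℝ≥0∞))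
        ≤ (C * N) ^ (β-1) * N := by
      have hH := ENNReal.lintegral_mul_le_Lp_mul_Lq (volume : Measure E2) hconj
        (aemeas v hv.continuous (β-1)) ((ENNReal.continuous_coe.comp
          ((hv.continuous_fderiv (by simp)).nnnorm)).aemeasurable)
      simp only [Pi.mul_apply] at hH
      refine hH.trans ?_
      gcongr
      · -- first factor ≤ (C*N)^(β-1)
        have e2 : (∫⁻ x : E2, ((‖v x‖₊ : ℝ≥0∞) ^ (β-1)) ^ (r/(r-1)))
            = ∫⁻ x : E2, (‖v x‖₊ : ℝ≥0∞) ^ a := by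
          apply lintegral_congr; intro x
          rw [← ENNReal.rpow_mul]
          congr 1
          rw [hβdef]
          have h1' : r - 1 ≠ 0 := by linarith
          field_simp
          ring
        rw [e2]
        have e3 : (∫⁻ x : E2, (‖v x‖₊ : ℝ≥0∞) ^ a) ^ (1/(r/(r-1)))
            = ((∫⁻ x : E2, (‖v x‖₊ : ℝ≥0∞) ^ a) ^ ((1:ℝ)/a)) ^ (β-1) := by
          rw [← ENNReal.rpow_mul]
          congr 1
          rw [hβdef]
          have h1' : r - 1 ≠ 0 := by linarith
          field_simp
          ring
        rw [e3]
        exact ENNReal.rpow_le_rpow (hG v hv h2v) (by linarith)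
      · -- second factor ≤ N
        rw [hN, NN]
        exact le_add_self
    calc C₀ * (∫⁻ x : E2, (‖fderiv ℝ w x‖₊ : ℝ≥0∞))
        ≤ C₀ * (ENNReal.ofReal β * ∫⁻ x : E2,
            (‖v x‖₊ : ℝ≥0∞) ^ (β-1) * (‖fderiv ℝ v x‖₊ : ℝ≥0∞)) := by gcongr
      _ ≤ C₀ * (ENNReal.ofReal β * ((C * N) ^ (β-1) * N)) := by gcongr
  calc (∫⁻ x : E2, (‖v x‖₊ : ℝ≥0∞) ^ (2 * β)) ^ (1/(2*β))
      = ((∫⁻ x : E2, (‖v x‖₊ : ℝ≥0∞) ^ (2*β)) ^ ((1:ℝ)/2)) ^ ((1:ℝ)/β) := by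
        rw [← ENNReal.rpow_mul]
        congr 1
        field_simp
    _ ≤ (C₀ * (ENNReal.ofReal β * ((C * N) ^ (β-1) * N))) ^ ((1:ℝ)/β) :=
        ENNReal.rpow_le_rpow key (by positivity)
    _ = ((C₀ * ENNReal.ofReal β * C ^ (β-1)) * N ^ β) ^ ((1:ℝ)/β) := by
        congr 1
        rw [ENNReal.mul_rpow_of_nonneg _ _ (by linarith : (0:ℝ) ≤ β-1)]
        have eN : N ^ β = N ^ (β-1) * N := by
          nth_rewrite 3 [← ENNReal.rpow_one N]
          rw [← ENNReal.rpow_add_of_nonneg _ _ (by linarith) zero_le_one]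
          congr 1; ring
        rw [eN]; ring
    _ = (C₀ * ENNReal.ofReal β * C ^ (β-1)) ^ ((1:ℝ)/β) * N := by
        rw [ENNReal.mul_rpow_of_nonneg _ _ (by positivity), ← ENNReal.rpow_mul,
          mul_one_div_cancel hβ0, ENNReal.rpow_one]

/-- interpolation -/
lemma good_interp {r a b q : ℝ} (hr : 0 < r) (ha : 0 < a) (hab : a ≤ q) (hqb : q ≤ b)
    (hGa : Good r a) (hGb : Good r b) : Good r q := by
  rcases eq_or_lt_of_le hab with h | hab'
  · exact h ▸ hGa
  rcases eq_or_lt_of_le hqb with h | hqb'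
  · exact h.symm ▸ hGb
  have hq0 : 0 < q := lt_trans ha hab'
  have hb0 : 0 < b := lt_trans hq0 hqb'
  have hba : 0 < b - a := by linarith
  set σ : ℝ := (b - q) / (b - a) with hσdef
  have hσ0 : 0 < σ := div_pos (by linarith) hba
  have hσ1 : σ < 1 := by
    rw [hσdef, div_lt_one hba]; linarith
  have h1σ : 0 < 1 - σ := by linarith
  have hsum : a * σ + b * (1 - σ) = q := by
    rw [hσdef]; field_simp; ring
  have hθ1 : 0 ≤ a * σ / q := by positivity
  have hθ2 : 0 ≤ b * (1 - σ) / q := by positivity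
  have hθsum : a * σ / q + b * (1 - σ) / q = 1 := by
    rw [← add_div, hsum, div_self hq0.ne']
  obtain ⟨Ca, hCa, hGa'⟩ := hGa
  obtain ⟨Cb, hCb, hGb'⟩ := hGb
  have hconj : ((1:ℝ)/σ).HolderConjugate (1/(1-σ)) := by
    rw [Real.holderConjugate_iff]
    constructor
    · rw [lt_div_iff₀ hσ0]; linarith
    · simp only [one_div, inv_inv]; ring
  unfold Good
  refine ⟨Ca ^ (a * σ / q) * Cb ^ (b * (1 - σ) / q),
    ENNReal.mul_ne_top (ENNReal.rpow_ne_top_of_nonneg hθ1 hCa)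
      (ENNReal.rpow_ne_top_of_nonneg hθ2 hCb), ?_⟩
  intro v hv h2v
  set N := NN r v with hN
  have hH := ENNReal.lintegral_mul_le_Lp_mul_Lq (volume : Measure E2) hconj
    (aemeas v hv.continuous (a * σ)) (aemeas v hv.continuous (b * (1 - σ)))
  simp only [Pi.mul_apply] at hH
  have e0 : (∫⁻ x : E2, (‖v x‖₊ : ℝ≥0∞) ^ q)
      = ∫⁻ x : E2, (‖v x‖₊ : ℝ≥0∞) ^ (a * σ) * (‖v x‖₊ : ℝ≥0∞) ^ (b * (1 - σ)) := by
    apply lintegral_congr; intro x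
    rw [← ENNReal.rpow_add_of_nonneg _ _ (by positivity) (by positivity), hsum]
  have e1 : (∫⁻ x : E2, ((‖v x‖₊ : ℝ≥0∞) ^ (a * σ)) ^ ((1:ℝ)/σ))
      = ∫⁻ x : E2, (‖v x‖₊ : ℝ≥0∞) ^ a := by
    apply lintegral_congr; intro x
    rw [← ENNReal.rpow_mul]; congr 1; field_simp
  have e2 : (∫⁻ x : E2, ((‖v x‖₊ : ℝ≥0∞) ^ (b * (1 - σ))) ^ ((1:ℝ)/(1-σ)))
      = ∫⁻ x : E2, (‖v x‖₊ : ℝ≥0∞) ^ b := by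
    apply lintegral_congr; intro x
    rw [← ENNReal.rpow_mul]; congr 1; field_simp
  rw [e1, e2, one_div_one_div, one_div_one_div] at hH
  rw [e0]
  calc (∫⁻ x : E2, (‖v x‖₊ : ℝ≥0∞) ^ (a * σ) * (‖v x‖₊ : ℝ≥0∞) ^ (b * (1 - σ))) ^ (1/q)
      ≤ ((∫⁻ x : E2, (‖v x‖₊ : ℝ≥0∞) ^ a) ^ σ
          * (∫⁻ x : E2, (‖v x‖₊ : ℝ≥0∞) ^ b) ^ (1 - σ)) ^ ((1:ℝ)/q) :=
        ENNReal.rpow_le_rpow hH (by positivity)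
    _ = ((∫⁻ x : E2, (‖v x‖₊ : ℝ≥0∞) ^ a) ^ ((1:ℝ)/a)) ^ (a * σ / q)
          * ((∫⁻ x : E2, (‖v x‖₊ : ℝ≥0∞) ^ b) ^ ((1:ℝ)/b)) ^ (b * (1 - σ) / q) := by
        rw [ENNReal.mul_rpow_of_nonneg _ _ (by positivity : (0:ℝ) ≤ 1/q),
          ← ENNReal.rpow_mul, ← ENNReal.rpow_mul, ← ENNReal.rpow_mul, ← ENNReal.rpow_mul]
        congr 1 <;> congr 1 <;> field_simp <;> ring
    _ ≤ (Ca * N) ^ (a * σ / q) * (Cb * N) ^ (b * (1 - σ) / q) := by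
        gcongr
        · exact hGa' v hv h2v
        · exact hGb' v hv h2v
    _ = Ca ^ (a * σ / q) * Cb ^ (b * (1 - σ) / q) * N := by
        rw [ENNReal.mul_rpow_of_nonneg _ _ hθ1, ENNReal.mul_rpow_of_nonneg _ _ hθ2]
        have : N ^ (a * σ / q) * N ^ (b * (1 - σ) / q) = N := by
          rw [← ENNReal.rpow_add_of_nonneg _ _ hθ1 hθ2, hθsum, ENNReal.rpow_one]
        calc Ca ^ (a * σ / q) * N ^ (a * σ / q) * (Cb ^ (b * (1 - σ) / q) * N ^ (b * (1 - σ) / q))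
            = Ca ^ (a * σ / q) * Cb ^ (b * (1 - σ) / q)
              * (N ^ (a * σ / q) * N ^ (b * (1 - σ) / q)) := by ring
          _ = _ := by rw [this]

lemma good_base {r : ℝ} (hr : 0 < r) : Good r r := by
  refine ⟨1, one_ne_top, fun v hv h2v => ?_⟩
  rw [one_mul, NN]
  exact le_self_add

lemma good_ladder {r : ℝ} (hr2 : 2 < r) : ∀ n : ℕ, ∃ b : ℝ, r + 2*n ≤ b ∧ Good r b := by
  intro n
  induction n with
  | zero => exact ⟨r, by simp, good_base (by linarith)⟩
  | succ n ih =>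
    obtain ⟨b, hb, hGb⟩ := ih
    have hn0 : (0:ℝ) ≤ 2*(n:ℝ) := by positivity
    have hrb : r ≤ b := by linarith
    refine ⟨2 * (b * (r-1) / r + 1), ?_, good_step hr2 hrb hGb⟩
    have hb0 : (0:ℝ) < b := by linarith
    have key : b / 2 ≤ b * (r-1)/r := by
      rw [div_le_div_iff₀ (by norm_num) (by linarith : (0:ℝ) < r)]
      nlinarith
    push_cast
    linarith

lemma good_all {r : ℝ} (hr2 : 2 < r) {q : ℝ} (hq : r ≤ q) : Good r q := by
  obtain ⟨b, hb, hGb⟩ := good_ladder hr2 ⌈(q - r)/2⌉₊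
  have hqb : q ≤ b := by
    have h1 : (q - r)/2 ≤ (⌈(q - r)/2⌉₊ : ℝ) := Nat.le_ceil _
    linarith
  exact good_interp (by linarith) (by linarith) hq hqb (good_base (by linarith)) hGb

/-- main ENNReal-level bound -/
lemma main_ennreal (p : ℝ) (hp : 3 ≤ p) (r : ℝ) (hr : r = 2 * (p - 1) / (p - 2)) :
    ∃ C : ℝ≥0∞, C ≠ ∞ ∧ ∀ v : E2 → ℂ, ContDiff ℝ (⊤ : ℕ∞) v → HasCompactSupport v →
      (∫⁻ x : E2, (‖v x‖₊ : ℝ≥0∞) ^ (2*(p-1))) ^ (1/2 : ℝ)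
        + (∫⁻ x : E2, (‖fderiv ℝ (fun y => ‖v y‖ ^ (p-1)) x‖₊ : ℝ≥0∞) ^ (2:ℝ)) ^ (1/2 : ℝ)
      ≤ C * NN r v ^ (p - 1) := by
  have hd : (0:ℝ) < p - 2 := by linarith
  have hp1 : (1:ℝ) < p - 1 := by linarith
  have hr2 : 2 < r := by
    rw [hr, lt_div_iff₀ hd]; linarith
  have hr4 : r ≤ 4 := by
    rw [hr, div_le_iff₀ hd]; linarith
  have hq1r : r ≤ 2*(p-1) := by linarith
  have htr : r ≤ 2*(p-1)*(p-2) := by nlinarith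
  obtain ⟨C1, hC1, hG1⟩ := good_all hr2 hq1r
  obtain ⟨Ct, hCt, hGt⟩ := good_all hr2 htr
  refine ⟨C1 ^ (p-1) + ENNReal.ofReal (p-1) * Ct ^ (p-2),
    ENNReal.add_ne_top.mpr ⟨ENNReal.rpow_ne_top_of_nonneg (by linarith) hC1,
      ENNReal.mul_ne_top ENNReal.ofReal_ne_top
        (ENNReal.rpow_ne_top_of_nonneg (by linarith) hCt)⟩, ?_⟩
  intro v hv h2v
  set N := NN r v with hN
  have hNfd : ((∫⁻ x : E2, (‖fderiv ℝ v x‖₊ : ℝ≥0∞) ^ r) ^ (1/r)) ≤ N := by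
    rw [hN, NN]; exact le_add_self
  -- Term 1
  have t1 : (∫⁻ x : E2, (‖v x‖₊ : ℝ≥0∞) ^ (2*(p-1))) ^ ((1:ℝ)/2)
      ≤ C1 ^ (p-1) * N ^ (p-1) := by
    have e : (∫⁻ x : E2, (‖v x‖₊ : ℝ≥0∞) ^ (2*(p-1))) ^ ((1:ℝ)/2)
        = ((∫⁻ x : E2, (‖v x‖₊ : ℝ≥0∞) ^ (2*(p-1))) ^ (1/(2*(p-1)))) ^ (p-1) := by
      rw [← ENNReal.rpow_mul]; congr 1
      have : p - 1 ≠ 0 := by linarith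
      field_simp
    rw [e, ← ENNReal.mul_rpow_of_nonneg _ _ (by linarith : (0:ℝ) ≤ p-1)]
    exact ENNReal.rpow_le_rpow (hG1 v hv h2v) (by linarith)
  -- Term 2
  have hpt : ∀ x : E2, (‖fderiv ℝ (fun y => ‖v y‖ ^ (p-1)) x‖₊ : ℝ≥0∞) ^ (2:ℝ)
      ≤ ENNReal.ofReal (p-1) ^ (2:ℝ)
        * ((‖v x‖₊ : ℝ≥0∞) ^ (2*(p-2)) * (‖fderiv ℝ v x‖₊ : ℝ≥0∞) ^ (2:ℝ)) := by
    intro x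
    have h := deriv_bound v hv hp1 x
    rw [show p - 1 - 1 = p - 2 by ring] at h
    calc (‖fderiv ℝ (fun y => ‖v y‖ ^ (p-1)) x‖₊ : ℝ≥0∞) ^ (2:ℝ)
        ≤ (ENNReal.ofReal (p-1)
            * ((‖v x‖₊ : ℝ≥0∞) ^ (p-2) * (‖fderiv ℝ v x‖₊ : ℝ≥0∞))) ^ (2:ℝ) :=
          ENNReal.rpow_le_rpow h (by norm_num)
      _ = ENNReal.ofReal (p-1) ^ (2:ℝ)
            * ((‖v x‖₊ : ℝ≥0∞) ^ (2*(p-2)) * (‖fderiv ℝ v x‖₊ : ℝ≥0∞) ^ (2:ℝ)) := by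
          rw [ENNReal.mul_rpow_of_nonneg _ _ (by norm_num : (0:ℝ) ≤ 2),
            ENNReal.mul_rpow_of_nonneg _ _ (by norm_num : (0:ℝ) ≤ 2),
            ← ENNReal.rpow_mul, mul_comm (p-2) 2]
  have hconj : (p-1).HolderConjugate ((p-1)/(p-2)) := by
    have h := Real.HolderConjugate.conjExponent hp1
    rwa [show Real.conjExponent (p-1) = (p-1)/(p-2) by
      rw [Real.conjExponent]; congr 1; ring] at h
  have hH := ENNReal.lintegral_mul_le_Lp_mul_Lq (volume : Measure E2) hconj
    (aemeas v hv.continuous (2*(p-2)))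
    (aemeas (fderiv ℝ v) (hv.continuous_fderiv (by simp)) 2)
  simp only [Pi.mul_apply] at hH
  have eA : (∫⁻ x : E2, ((‖v x‖₊ : ℝ≥0∞) ^ (2*(p-2))) ^ (p-1))
      = ∫⁻ x : E2, (‖v x‖₊ : ℝ≥0∞) ^ (2*(p-1)*(p-2)) := by
    apply lintegral_congr; intro x
    rw [← ENNReal.rpow_mul]; congr 1; ring
  have eB : (∫⁻ x : E2, ((‖fderiv ℝ v x‖₊ : ℝ≥0∞) ^ (2:ℝ)) ^ ((p-1)/(p-2)))
      = ∫⁻ x : E2, (‖fderiv ℝ v x‖₊ : ℝ≥0∞) ^ r := by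
    apply lintegral_congr; intro x
    rw [← ENNReal.rpow_mul]; congr 1
    rw [hr]; ring
  rw [eA, eB, one_div_div] at hH
  have f1 : (∫⁻ x : E2, (‖v x‖₊ : ℝ≥0∞) ^ (2*(p-1)*(p-2))) ^ (1/(p-1))
      ≤ (Ct * N) ^ (2*(p-2)) := by
    have e : (∫⁻ x : E2, (‖v x‖₊ : ℝ≥0∞) ^ (2*(p-1)*(p-2))) ^ (1/(p-1))
        = ((∫⁻ x : E2, (‖v x‖₊ : ℝ≥0∞) ^ (2*(p-1)*(p-2))) ^ (1/(2*(p-1)*(p-2)))) ^ (2*(p-2)) := by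
      rw [← ENNReal.rpow_mul]; congr 1
      have h1 : p - 1 ≠ 0 := by linarith
      have h2 : p - 2 ≠ 0 := by linarith
      field_simp
    rw [e]
    exact ENNReal.rpow_le_rpow (hGt v hv h2v) (by linarith)
  have f2 : (∫⁻ x : E2, (‖fderiv ℝ v x‖₊ : ℝ≥0∞) ^ r) ^ ((p-2)/(p-1)) ≤ N ^ (2:ℝ) := by
    have e : (∫⁻ x : E2, (‖fderiv ℝ v x‖₊ : ℝ≥0∞) ^ r) ^ ((p-2)/(p-1))
        = ((∫⁻ x : E2, (‖fderiv ℝ v x‖₊ : ℝ≥0∞) ^ r) ^ (1/r)) ^ (2:ℝ) := by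
      rw [← ENNReal.rpow_mul]; congr 1
      rw [hr]
      have h1 : p - 1 ≠ 0 := by linarith
      have h2 : p - 2 ≠ 0 := by linarith
      field_simp
    rw [e]
    exact ENNReal.rpow_le_rpow hNfd (by norm_num)
  have t2 : (∫⁻ x : E2, (‖fderiv ℝ (fun y => ‖v y‖ ^ (p-1)) x‖₊ : ℝ≥0∞) ^ (2:ℝ)) ^ ((1:ℝ)/2)
      ≤ ENNReal.ofReal (p-1) * Ct ^ (p-2) * N ^ (p-1) := by
    have hle : (∫⁻ x : E2, (‖fderiv ℝ (fun y => ‖v y‖ ^ (p-1)) x‖₊ : ℝ≥0∞) ^ (2:ℝ))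
        ≤ ENNReal.ofReal (p-1) ^ (2:ℝ) * ((Ct * N) ^ (2*(p-2)) * N ^ (2:ℝ)) := by
      calc (∫⁻ x : E2, (‖fderiv ℝ (fun y => ‖v y‖ ^ (p-1)) x‖₊ : ℝ≥0∞) ^ (2:ℝ))
          ≤ ∫⁻ x : E2, ENNReal.ofReal (p-1) ^ (2:ℝ)
              * ((‖v x‖₊ : ℝ≥0∞) ^ (2*(p-2)) * (‖fderiv ℝ v x‖₊ : ℝ≥0∞) ^ (2:ℝ)) :=
            lintegral_mono hpt
        _ = ENNReal.ofReal (p-1) ^ (2:ℝ)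
              * ∫⁻ x : E2, (‖v x‖₊ : ℝ≥0∞) ^ (2*(p-2)) * (‖fderiv ℝ v x‖₊ : ℝ≥0∞) ^ (2:ℝ) :=
            lintegral_const_mul' _ _ (ENNReal.rpow_ne_top_of_nonneg (by norm_num)
              ENNReal.ofReal_ne_top)
        _ ≤ ENNReal.ofReal (p-1) ^ (2:ℝ) * ((Ct * N) ^ (2*(p-2)) * N ^ (2:ℝ)) := by
            refine mul_le_mul_right (hH.trans ?_) _
            exact mul_le_mul' f1 f2
    calc (∫⁻ x : E2, (‖fderiv ℝ (fun y => ‖v y‖ ^ (p-1)) x‖₊ : ℝ≥0∞) ^ (2:ℝ)) ^ ((1:ℝ)/2)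
        ≤ (ENNReal.ofReal (p-1) ^ (2:ℝ) * ((Ct * N) ^ (2*(p-2)) * N ^ (2:ℝ))) ^ ((1:ℝ)/2) :=
          ENNReal.rpow_le_rpow hle (by norm_num)
      _ = ENNReal.ofReal (p-1) * Ct ^ (p-2) * N ^ (p-1) := by
          rw [ENNReal.mul_rpow_of_nonneg _ _ (by norm_num : (0:ℝ) ≤ 1/2),
            ENNReal.mul_rpow_of_nonneg _ _ (by norm_num : (0:ℝ) ≤ 1/2),
            ENNReal.mul_rpow_of_nonneg _ _ (by linarith : (0:ℝ) ≤ 2*(p-2)),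
            ENNReal.mul_rpow_of_nonneg _ _ (by norm_num : (0:ℝ) ≤ 1/2),
            ← ENNReal.rpow_mul, ← ENNReal.rpow_mul, ← ENNReal.rpow_mul, ← ENNReal.rpow_mul]
          rw [show (2:ℝ)*(1/2) = 1 by norm_num, show 2*(p-2)*((1:ℝ)/2) = p-2 by ring,
            ENNReal.rpow_one, ENNReal.rpow_one]
          have eN : N ^ (p-2) * N = N ^ (p-1) := by
            nth_rewrite 2 [← ENNReal.rpow_one N]
            rw [← ENNReal.rpow_add_of_nonneg _ _ (by linarith) zero_le_one]
            congr 1; ring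
          rw [mul_assoc, eN, ← mul_assoc]
  calc (∫⁻ x : E2, (‖v x‖₊ : ℝ≥0∞) ^ (2*(p-1))) ^ ((1:ℝ)/2)
        + (∫⁻ x : E2, (‖fderiv ℝ (fun y => ‖v y‖ ^ (p-1)) x‖₊ : ℝ≥0∞) ^ (2:ℝ)) ^ ((1:ℝ)/2)
      ≤ C1 ^ (p-1) * N ^ (p-1) + ENNReal.ofReal (p-1) * Ct ^ (p-2) * N ^ (p-1) :=
        add_le_add t1 t2
    _ = (C1 ^ (p-1) + ENNReal.ofReal (p-1) * Ct ^ (p-2)) * N ^ (p-1) := by ring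

/-- real integral as toReal of lintegral -/
lemma integral_norm_rpow_eq {F : Type*} [NormedAddCommGroup F] (f : E2 → F)
    (hf : Continuous f) {q : ℝ} (hq : 0 < q) :
    ∫ x : E2, ‖f x‖ ^ q = (∫⁻ x : E2, (‖f x‖₊ : ℝ≥0∞) ^ q).toReal := by
  rw [integral_eq_lintegral_of_nonneg_ae (ae_of_all _ fun x => by positivity)
    ((hf.norm.rpow_const fun x => Or.inr hq.le).aestronglyMeasurable)]
  congr 1
  apply lintegral_congr
  intro x
  rw [← enorm_eq_nnnorm, ← ofReal_norm, ENNReal.ofReal_rpow_of_nonneg (norm_nonneg _) hq.le]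

end PowerH1

open PowerH1 ENNReal NNReal in
/-- For real `p ≥ 3` and `r = 2(p−1)/(p−2)`, one has
`‖ |v|^{p−1} ‖_{H¹(ℝ²)} ≲ ‖v‖_{W^{1,r}(ℝ²)}^{p−1}` for smooth compactly supported `v`. -/
theorem power_H1_bound (p : ℝ) (hp : 3 ≤ p) (r : ℝ) (hr : r = 2 * (p - 1) / (p - 2)) :
    ∃ C : ℝ, 0 < C ∧ ∀ v : E2 → ℂ, ContDiff ℝ (⊤ : ℕ∞) v → HasCompactSupport v →
      (∫ x : E2, (‖v x‖ ^ (p - 1)) ^ 2) ^ (1/2 : ℝ)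
          + (∫ x : E2, ‖fderiv ℝ (fun y => ‖v y‖ ^ (p - 1)) x‖ ^ 2) ^ (1/2 : ℝ)
        ≤ C * ((∫ x : E2, ‖v x‖ ^ r) ^ (1 / r)
          + (∫ x : E2, ‖fderiv ℝ v x‖ ^ r) ^ (1 / r)) ^ (p - 1) := by
  obtain ⟨C', hC', hMain⟩ := main_ennreal p hp r hr
  have hd : (0:ℝ) < p - 2 := by linarith
  have hr0 : (0:ℝ) < r := by rw [hr]; exact div_pos (by linarith) hd
  have hp1 : (1:ℝ) < p - 1 := by linarith
  refine ⟨(C' + 1).toReal, ENNReal.toReal_pos (by simp) (ENNReal.add_ne_top.mpr ⟨hC', ENNReal.one_ne_top⟩), ?_⟩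
  intro v hv h2v
  have hwC : ContDiff ℝ 1 (fun y => ‖v y‖ ^ (p-1)) := (hv.of_le (by simp)).norm_rpow hp1
  have h2w : HasCompactSupport (fun y => ‖v y‖ ^ (p-1)) :=
    h2v.norm.rpow_const (by linarith)
  set T1 : ℝ≥0∞ := ∫⁻ x : E2, (‖v x‖₊ : ℝ≥0∞) ^ (2*(p-1)) with hT1def
  set T2 : ℝ≥0∞ := ∫⁻ x : E2, (‖fderiv ℝ (fun y => ‖v y‖ ^ (p-1)) x‖₊ : ℝ≥0∞) ^ (2:ℝ) with hT2def
  have hT1 : T1 ≠ ∞ := (lintegral_rpow_lt_top v hv.continuous h2v (by linarith)).ne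
  have hT2 : T2 ≠ ∞ := (lintegral_rpow_lt_top _ (hwC.continuous_fderiv one_ne_zero)
    (h2w.fderiv (𝕜 := ℝ)) (by norm_num)).ne
  have hNt : NN r v ≠ ∞ := (NN_lt_top hr0 v hv h2v).ne
  -- convert the four real integrals
  have eq1 : (∫ x : E2, (‖v x‖ ^ (p-1)) ^ 2) = T1.toReal := by
    rw [hT1def]
    rw [show (fun x : E2 => (‖v x‖ ^ (p-1)) ^ 2) = fun x : E2 => ‖v x‖ ^ (2*(p-1)) from
      funext fun x => by
        rw [← Real.rpow_natCast (‖v x‖ ^ (p-1)) 2, ← Real.rpow_mul (norm_nonneg _)]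
        norm_num [mul_comm]]
    exact integral_norm_rpow_eq v hv.continuous (by linarith)
  have eq2 : (∫ x : E2, ‖fderiv ℝ (fun y => ‖v y‖ ^ (p-1)) x‖ ^ 2) = T2.toReal := by
    rw [hT2def]
    rw [show (fun x : E2 => ‖fderiv ℝ (fun y => ‖v y‖ ^ (p-1)) x‖ ^ 2)
        = fun x : E2 => ‖fderiv ℝ (fun y => ‖v y‖ ^ (p-1)) x‖ ^ (2:ℝ) from
      funext fun x => by rw [← Real.rpow_natCast _ 2]; norm_num]
    exact integral_norm_rpow_eq _ (hwC.continuous_fderiv one_ne_zero) (by norm_num)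
  have eq3 : (∫ x : E2, ‖v x‖ ^ r) = (∫⁻ x : E2, (‖v x‖₊ : ℝ≥0∞) ^ r).toReal :=
    integral_norm_rpow_eq v hv.continuous hr0
  have eq4 : (∫ x : E2, ‖fderiv ℝ v x‖ ^ r)
      = (∫⁻ x : E2, (‖fderiv ℝ v x‖₊ : ℝ≥0∞) ^ r).toReal :=
    integral_norm_rpow_eq _ (hv.continuous_fderiv (by simp)) hr0
  rw [eq1, eq2, eq3, eq4]
  have fT1 : T1 ^ (1/2:ℝ) ≠ ∞ := ENNReal.rpow_ne_top_of_nonneg (by norm_num) hT1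
  have fT2 : T2 ^ (1/2:ℝ) ≠ ∞ := ENNReal.rpow_ne_top_of_nonneg (by norm_num) hT2
  have fA : (∫⁻ x : E2, (‖v x‖₊ : ℝ≥0∞) ^ r) ^ (1/r) ≠ ∞ :=
    ENNReal.rpow_ne_top_of_nonneg (by positivity)
      (lintegral_rpow_lt_top v hv.continuous h2v hr0).ne
  have fB : (∫⁻ x : E2, (‖fderiv ℝ v x‖₊ : ℝ≥0∞) ^ r) ^ (1/r) ≠ ∞ :=
    ENNReal.rpow_ne_top_of_nonneg (by positivity)
      (lintegral_rpow_lt_top _ (hv.continuous_fderiv (by simp)) (h2v.fderiv (𝕜 := ℝ)) hr0).ne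
  rw [ENNReal.toReal_rpow, ENNReal.toReal_rpow, ENNReal.toReal_rpow, ENNReal.toReal_rpow,
    ← ENNReal.toReal_add fT1 fT2, ← ENNReal.toReal_add fA fB]
  have hsum : (∫⁻ x : E2, (‖v x‖₊ : ℝ≥0∞) ^ r) ^ (1/r)
      + (∫⁻ x : E2, (‖fderiv ℝ v x‖₊ : ℝ≥0∞) ^ r) ^ (1/r) = NN r v := rfl
  rw [hsum, ENNReal.toReal_rpow, ← ENNReal.toReal_mul]
  apply ENNReal.toReal_mono
  · exact ENNReal.mul_ne_top (ENNReal.add_ne_top.mpr ⟨hC', ENNReal.one_ne_top⟩)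
      (ENNReal.rpow_ne_top_of_nonneg (by linarith) hNt)
  · calc T1 ^ (1/2:ℝ) + T2 ^ (1/2:ℝ) ≤ C' * NN r v ^ (p-1) := hMain v hv h2v
      _ ≤ (C' + 1) * NN r v ^ (p-1) := mul_le_mul_left le_self_add _
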